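/- arXiv:2004.11319 — 2 statements merged into one kernel-verified Lean document; each statement's English description precedes it below -/
import Mathlib

section
/- Let E₁ = {±2^j : j ∈ ℤ} and E₂ = {±(2^k − 2^l) : k, l ∈ ℤ, k > l}. Then E₂ is a successor of E₁: there exists a constant c > 0 such that for all distinct x, y ∈ E₂, |x − y| ≥ c · dist(x, E₁). -/
open Real Set

/-- The first-order lacunary set `E₁ = {±2^j : j ∈ ℤ}`. -/
def E1 : Set ℝ := {x | ∃ j : ℤ, x = (2:ℝ) ^ j ∨ x = -((2:ℝ) ^ j)}

/-- The second-order lacunary set `E₂ = {±(2^k - 2^l) : k, l ∈ ℤ, k > l}`. -/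
def E2 : Set ℝ :=
  {x | ∃ k l : ℤ, l < k ∧ (x = (2:ℝ) ^ k - (2:ℝ) ^ l ∨ x = -((2:ℝ) ^ k - (2:ℝ) ^ l))}

lemma zp (j : ℤ) : (0:ℝ) < (2:ℝ)^j := zpow_pos two_pos j

lemma zmono {l k : ℤ} (h : l ≤ k) : (2:ℝ)^l ≤ (2:ℝ)^k :=
  zpow_le_zpow_right₀ one_le_two h

lemma zhalf (k : ℤ) : (2:ℝ)^(k-1) + (2:ℝ)^(k-1) = (2:ℝ)^k := by
  have := zpow_add_one₀ (two_ne_zero (α := ℝ)) (k-1)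
  rw [sub_add_cancel] at this
  rw [← two_mul] at *
  linarith [this]

lemma infd_pos {k l : ℤ} (h : l < k) :
    Metric.infDist ((2:ℝ)^k - 2^l) E1 ≤ min ((2:ℝ)^l) ((2:ℝ)^(k-1) - 2^l) := by
  have h1 : Metric.infDist ((2:ℝ)^k - 2^l) E1 ≤ dist ((2:ℝ)^k - 2^l) ((2:ℝ)^k) :=
    Metric.infDist_le_dist_of_mem ⟨k, Or.inl rfl⟩
  have h2 : Metric.infDist ((2:ℝ)^k - 2^l) E1 ≤ dist ((2:ℝ)^k - 2^l) ((2:ℝ)^(k-1)) :=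
    Metric.infDist_le_dist_of_mem ⟨k-1, Or.inl rfl⟩
  have hle : (2:ℝ)^l ≤ (2:ℝ)^(k-1) := zmono (by omega)
  rw [Real.dist_eq] at h1 h2
  rw [le_min_iff]
  constructor
  · calc _ ≤ _ := h1
    _ = (2:ℝ)^l := by rw [abs_of_nonpos (by linarith [zp l])]; ring
  · calc _ ≤ _ := h2
    _ = (2:ℝ)^(k-1) - 2^l := by
        have := zhalf k
        rw [abs_of_nonneg (by linarith)]; linarith

lemma infd_neg {k l : ℤ} (h : l < k) :
    Metric.infDist (-((2:ℝ)^k - 2^l)) E1 ≤ min ((2:ℝ)^l) ((2:ℝ)^(k-1) - 2^l) := by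
  have h1 : Metric.infDist (-((2:ℝ)^k - 2^l)) E1 ≤ dist (-((2:ℝ)^k - 2^l)) (-(2:ℝ)^k) :=
    Metric.infDist_le_dist_of_mem ⟨k, Or.inr rfl⟩
  have h2 : Metric.infDist (-((2:ℝ)^k - 2^l)) E1 ≤ dist (-((2:ℝ)^k - 2^l)) (-(2:ℝ)^(k-1)) :=
    Metric.infDist_le_dist_of_mem ⟨k-1, Or.inr rfl⟩
  have hle : (2:ℝ)^l ≤ (2:ℝ)^(k-1) := zmono (by omega)
  rw [Real.dist_eq] at h1 h2
  rw [le_min_iff]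
  constructor
  · calc _ ≤ _ := h1
    _ = (2:ℝ)^l := by rw [abs_of_nonneg (by linarith [zp l])]; ring
  · calc _ ≤ _ := h2
    _ = (2:ℝ)^(k-1) - 2^l := by
        have := zhalf k
        rw [abs_of_nonpos (by linarith)]; linarith

lemma gap {k l k' l' : ℤ} (hlk : l < k) (hlk' : l' < k')
    (hne : (2:ℝ)^k - 2^l ≠ (2:ℝ)^k' - 2^l') :
    min ((2:ℝ)^l) ((2:ℝ)^(k-1) - 2^l)
      ≤ 2 * |((2:ℝ)^k - 2^l) - ((2:ℝ)^k' - 2^l')| := by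
  set a := ((2:ℝ)^k - 2^l) - ((2:ℝ)^k' - 2^l') with ha
  have habs1 : a ≤ |a| := le_abs_self a
  have habs2 : -a ≤ |a| := neg_le_abs a
  rcases lt_trichotomy k k' with hk | hk | hk
  · -- k < k' : min ≤ 2^l ≤ -a
    have h1 : (2:ℝ)^l' ≤ (2:ℝ)^(k'-1) := zmono (by omega)
    have h2 : (2:ℝ)^k ≤ (2:ℝ)^(k'-1) := zmono (by omega)
    have h3 := zhalf k'
    have : (2:ℝ)^l ≤ -a := by rw [ha]; linarith
    have hmin : min ((2:ℝ)^l) ((2:ℝ)^(k-1) - 2^l) ≤ (2:ℝ)^l := min_le_left _ _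
    linarith
  · -- k = k' : distinct l
    subst hk
    have hll : l ≠ l' := by
      intro h; subst h; exact hne rfl
    have hmin : min ((2:ℝ)^l) ((2:ℝ)^(k-1) - 2^l) ≤ (2:ℝ)^l := min_le_left _ _
    rcases lt_or_gt_of_ne hll with hl | hl
    · -- l < l' : a = 2^{l'} - 2^l ≥ 2^l
      have h1 : (2:ℝ)^(l+1) ≤ (2:ℝ)^l' := zmono (by omega)
      have h2 := zhalf (l+1)
      rw [show l+1-1 = l by ring] at h2
      have : (2:ℝ)^l ≤ a := by rw [ha]; linarith
      linarith
    · -- l' < l : -a = 2^l - 2^{l'} ≥ 2^{l-1}, so 2^l ≤ 2*(-a)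
      have h1 : (2:ℝ)^l' ≤ (2:ℝ)^(l-1) := zmono (by omega)
      have h2 := zhalf l
      have : (2:ℝ)^(l-1) ≤ -a := by rw [ha]; linarith
      linarith
  · -- k' < k : min ≤ 2^{k-1} - 2^l ≤ a
    have h1 : (2:ℝ)^k' ≤ (2:ℝ)^(k-1) := zmono (by omega)
    have h2 := zhalf k
    have hp := zp l'
    have : (2:ℝ)^(k-1) - 2^l ≤ a := by rw [ha]; linarith
    have hmin : min ((2:ℝ)^l) ((2:ℝ)^(k-1) - 2^l) ≤ (2:ℝ)^(k-1) - 2^l := min_le_right _ _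
    linarith

/-- `E₂` is a successor of `E₁` in the sense of Sjögren–Sjölin:
there is `c > 0` with `|x - y| ≥ c · dist(x, E₁)` for all distinct `x, y ∈ E₂`. -/
theorem stmt3 :
    ∃ c : ℝ, 0 < c ∧ ∀ x ∈ E2, ∀ y ∈ E2, x ≠ y →
      c * Metric.infDist x E1 ≤ |x - y| := by
  refine ⟨1/2, by norm_num, ?_⟩
  rintro x ⟨k, l, hlk, hx⟩ y ⟨k', l', hlk', hy⟩ hxy
  have hposx : (2:ℝ)^(k-1) ≤ (2:ℝ)^k - 2^l := by
    have := zhalf k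
    have := zmono (show l ≤ k-1 by omega)
    linarith
  have hposy : (2:ℝ)^(k'-1) ≤ (2:ℝ)^k' - 2^l' := by
    have := zhalf k'
    have := zmono (show l' ≤ k'-1 by omega)
    linarith
  have hlk1 : (2:ℝ)^l ≤ (2:ℝ)^(k-1) := zmono (by omega)
  have hpk1 := zp (k-1)
  have hpk1' := zp (k'-1)
  have hpl := zp l
  rcases hx with rfl | rfl <;> rcases hy with rfl | rfl
  · -- ++
    have hd := infd_pos hlk
    have hg := gap hlk hlk' hxy
    have := min_le_left ((2:ℝ)^l) ((2:ℝ)^(k-1) - 2^l)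
    linarith
  · -- +- : |x - y| = big
    have hd := infd_pos hlk
    have habs : ((2:ℝ)^k - 2^l) + ((2:ℝ)^k' - 2^l')
        ≤ |((2:ℝ)^k - 2^l) - (-((2:ℝ)^k' - 2^l'))| := by
      rw [sub_neg_eq_add]
      exact le_abs_self _
    have hmin : min ((2:ℝ)^l) ((2:ℝ)^(k-1) - 2^l) ≤ (2:ℝ)^l := min_le_left _ _
    linarith
  · -- -+
    have hd := infd_neg hlk
    have habs : ((2:ℝ)^k - 2^l) + ((2:ℝ)^k' - 2^l')
        ≤ |(-((2:ℝ)^k - 2^l)) - ((2:ℝ)^k' - 2^l')| := by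
      have := neg_le_abs ((-((2:ℝ)^k - 2^l)) - ((2:ℝ)^k' - 2^l'))
      linarith
    have hmin : min ((2:ℝ)^l) ((2:ℝ)^(k-1) - 2^l) ≤ (2:ℝ)^l := min_le_left _ _
    linarith
  · -- --
    have hd := infd_neg hlk
    have hne : (2:ℝ)^k - 2^l ≠ (2:ℝ)^k' - 2^l' := by
      intro h; exact hxy (by rw [h])
    have hg := gap hlk hlk' hne
    have habs : |(-((2:ℝ)^k - 2^l)) - (-((2:ℝ)^k' - 2^l'))|
        = |((2:ℝ)^k - 2^l) - ((2:ℝ)^k' - 2^l')| := by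
      rw [show (-((2:ℝ)^k - 2^l)) - (-((2:ℝ)^k' - 2^l')) = -(((2:ℝ)^k - 2^l) - ((2:ℝ)^k' - 2^l')) by ring, abs_neg]
    rw [habs]
    linarith
end

section
/- Let Ẽ₂ = {±(2^k + 2^l) : k, l ∈ ℤ, k > l} and E₁ = {±2^j : j ∈ ℤ}. Then there exists a constant c > 0 such that for all distinct x, y ∈ Ẽ₂, |x − y| ≥ c · dist(x, E₁). -/
open Real Set

/-- The set `Ẽ₂ = {±(2^k + 2^l) : k, l ∈ ℤ, k > l}`. -/
def E2tilde : Set ℝ :=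
  {x | ∃ k l : ℤ, l < k ∧ (x = (2:ℝ) ^ k + (2:ℝ) ^ l ∨ x = -((2:ℝ) ^ k + (2:ℝ) ^ l))}

lemma two_zpow_pos (n : ℤ) : (0:ℝ) < 2 ^ n := zpow_pos (by norm_num) n

lemma two_zpow_mono {a b : ℤ} (h : a ≤ b) : (2:ℝ) ^ a ≤ 2 ^ b :=
  zpow_le_zpow_right₀ (by norm_num) h

lemma two_zpow_succ_le {a b : ℤ} (h : a < b) : 2 * (2:ℝ) ^ a ≤ 2 ^ b := by
  have := two_zpow_mono (show a + 1 ≤ b by omega)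
  rwa [zpow_add_one₀ (by norm_num : (2:ℝ) ≠ 0), mul_comm] at this

/-- Key gap lemma: two distinct two-bit dyadic numbers differ by at least `2^l / 2`. -/
lemma key (k l k' l' : ℤ) (h : l < k) (h' : l' < k') (hne : k ≠ k' ∨ l ≠ l') :
    (2:ℝ) ^ l / 2 ≤ |((2:ℝ) ^ k + 2 ^ l) - ((2:ℝ) ^ k' + 2 ^ l')| := by
  have pl := two_zpow_pos l
  have pl' := two_zpow_pos l'
  have pk := two_zpow_pos k
  have pk' := two_zpow_pos k'
  rcases lt_trichotomy k k' with hk | hk | hk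
  · -- k < k' : y - x ≥ 2^l
    rw [abs_sub_comm]
    refine le_trans ?_ (le_abs_self _)
    have h1 : 2 * (2:ℝ) ^ k ≤ 2 ^ k' := two_zpow_succ_le hk
    have h2 : 2 * (2:ℝ) ^ l ≤ 2 ^ k := two_zpow_succ_le h
    linarith
  · subst hk
    have hll : l ≠ l' := hne.resolve_left (by simp)
    rcases lt_trichotomy l l' with hl | hl | hl
    · rw [abs_sub_comm]
      refine le_trans ?_ (le_abs_self _)
      have h1 : 2 * (2:ℝ) ^ l ≤ 2 ^ l' := two_zpow_succ_le hl
      linarith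
    · exact absurd hl hll
    · refine le_trans ?_ (le_abs_self _)
      have h1 : 2 * (2:ℝ) ^ l' ≤ 2 ^ l := two_zpow_succ_le hl
      linarith
  · -- k' < k : x - y ≥ 2^l
    refine le_trans ?_ (le_abs_self _)
    have h1 : 2 * (2:ℝ) ^ k' ≤ 2 ^ k := two_zpow_succ_le hk
    have h2 : 2 * (2:ℝ) ^ l' ≤ 2 ^ k' := two_zpow_succ_le h'
    linarith

/-- `Ẽ₂` is a successor of `E₁`: there is `c > 0` such that
`|x - y| ≥ c · dist(x, E₁)` for all distinct `x, y ∈ Ẽ₂`. -/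
theorem stmt4 :
    ∃ c : ℝ, 0 < c ∧ ∀ x ∈ E2tilde, ∀ y ∈ E2tilde, x ≠ y →
      c * Metric.infDist x E1 ≤ |x - y| := by
  refine ⟨1/2, by norm_num, ?_⟩
  rintro x ⟨k, l, hlk, hx⟩ y ⟨k', l', hlk', hy⟩ hxy
  have pl := two_zpow_pos l
  have pl' := two_zpow_pos l'
  have pk := two_zpow_pos k
  have pk' := two_zpow_pos k'
  -- distance to E1 is at most 2^l
  have hd : Metric.infDist x E1 ≤ 2 ^ l := by
    rcases hx with h | h
    · calc Metric.infDist x E1 ≤ dist x ((2:ℝ) ^ k) :=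
            Metric.infDist_le_dist_of_mem ⟨k, Or.inl rfl⟩
        _ = 2 ^ l := by
            rw [h, Real.dist_eq, add_sub_cancel_left, abs_of_pos pl]
    · calc Metric.infDist x E1 ≤ dist x (-(2:ℝ) ^ k) :=
            Metric.infDist_le_dist_of_mem ⟨k, Or.inr rfl⟩
        _ = 2 ^ l := by
            rw [h, Real.dist_eq]
            rw [show -((2:ℝ)^k + 2^l) - -(2:ℝ)^k = -(2^l) by ring, abs_neg, abs_of_pos pl]
  suffices h2 : (2:ℝ) ^ l / 2 ≤ |x - y| by
    have h0 : 0 ≤ Metric.infDist x E1 := Metric.infDist_nonneg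
    calc (1/2) * Metric.infDist x E1 ≤ (1/2) * 2 ^ l := by linarith
      _ = 2 ^ l / 2 := by ring
      _ ≤ |x - y| := h2
  rcases hx with h | h <;> rcases hy with h' | h'
  · -- both positive
    have hne : k ≠ k' ∨ l ≠ l' := by
      by_contra hc
      push_neg at hc
      exact hxy (by rw [h, h', hc.1, hc.2])
    rw [h, h']; exact key k l k' l' hlk hlk' hne
  · -- x positive, y negative
    rw [h, h']
    refine le_trans ?_ (le_abs_self _)
    linarith
  · -- x negative, y positive
    rw [h, h', abs_sub_comm]
    refine le_trans ?_ (le_abs_self _)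
    linarith
  · -- both negative
    have hne : k ≠ k' ∨ l ≠ l' := by
      by_contra hc
      push_neg at hc
      exact hxy (by rw [h, h', hc.1, hc.2])
    rw [h, h', show -((2:ℝ)^k + 2^l) - -((2:ℝ)^k' + 2^l') =
      -(((2:ℝ)^k + 2^l) - ((2:ℝ)^k' + 2^l')) by ring, abs_neg]
    exact key k l k' l' hlk hlk' hne
end
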